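/- Every special numerical semigroup S satisfies Wilf's inequality: e(S)·n(S) ≥ F(S) + 1, where e(S) is the embedding dimension, n(S) the number of elements of S less than F(S), and F(S) the Frobenius number. -/

import Mathlib

open Set

/-- A numerical semigroup: a submonoid of ℕ with finite complement. -/
def IsNumSgp (S : Set ℕ) : Prop :=
  0 ∈ S ∧ (∀ a ∈ S, ∀ b ∈ S, a + b ∈ S) ∧ Sᶜ.Finite

/-- The Frobenius number: the largest gap. -/
noncomputable def frob (S : Set ℕ) : ℕ := sSup Sᶜ

/-- The multiplicity: the least nonzero element. -/
noncomputable def mult (S : Set ℕ) : ℕ := sInf (S \ {0})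

/-- The genus: the number of gaps. -/
noncomputable def genus (S : Set ℕ) : ℕ := Sᶜ.ncard

/-- The number of left elements: elements of S smaller than the Frobenius number. -/
noncomputable def leftEls (S : Set ℕ) : ℕ := {s ∈ S | s < frob S}.ncard

/-- x is a minimal generator of S: nonzero and not a sum of two nonzero elements of S. -/
def IsMinGen (S : Set ℕ) (x : ℕ) : Prop :=
  x ∈ S ∧ x ≠ 0 ∧ ¬ ∃ a ∈ S, ∃ b ∈ S, a ≠ 0 ∧ b ≠ 0 ∧ x = a + b

/-- The embedding dimension: number of minimal generators. -/
noncomputable def edim (S : Set ℕ) : ℕ := {x | IsMinGen S x}.ncard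

/-- The set of special gaps of S. -/
def SG (S : Set ℕ) : Set ℕ :=
  {h | h ∉ S ∧ 2 * h ∈ S ∧ ∀ s ∈ S, s ≠ 0 → h + s ∈ S}

/-- Irreducible numerical semigroup (characterization via special gaps). -/
def IsIrred (S : Set ℕ) : Prop := SG S = {frob S}

/-- Ordinary numerical semigroup. -/
def IsOrdinary (S : Set ℕ) : Prop := ∃ c, S = {0} ∪ {m | c ≤ m}

/-- Special numerical semigroup: every special gap other than F(S) is below the multiplicity. -/
def IsSpecial (S : Set ℕ) : Prop := ∀ h ∈ SG S, h ≠ frob S → h < mult S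

/-- The transform 𝒜, defined on non-special numerical semigroups. -/
noncomputable def Atrans (S : Set ℕ) : Set ℕ :=
  (S ∪ {sSup (SG S \ {frob S})}) \ {mult S}

/-- The sub-Frobenius number: the largest gap different from F(S). -/
noncomputable def subFrob (S : Set ℕ) : ℕ := sSup (Sᶜ \ {frob S})

/-- Almost-ordinary: exactly one gap greater than the multiplicity. -/
noncomputable def IsAlmostOrdinary (S : Set ℕ) : Prop := {h | h ∉ S ∧ mult S < h}.ncard = 1

/-- The transform ℬ of Bras-Amorós. -/
noncomputable def Btrans (S : Set ℕ) : Set ℕ := (S \ {mult S}) ∪ {subFrob S}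

/-!
If `S` is irreducible, `x ↦ F - x` maps the gaps `x` with `2x ≠ F` injectively into the elements
of `S` below `F`, so `g ≤ n + 1`, and even `g ≤ n` when `F` is odd. As `F + 1 = n + g`, this gives
Wilf's inequality when `e ≥ 3`; and if `e = 2`, then `S = ⟨a, b⟩` with `a, b` coprime, so
`F = ab - a - b` is odd.

If `S` is special but not irreducible, it has a special gap `h < m` other than `F`. Then every gap
other than `F` is below `m`: otherwise the sub-Frobenius number `f ≥ m` satisfies `F - f ≤ h < m`,
which makes `f` a special gap. Hence `S = {0} ∪ [m, ∞) \ {F}`, so `n = F - m + 1`, the elements of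
`[m, 2m) \ {F}` are minimal generators, and the inequality becomes arithmetic.
-/
theorem Nat.odd_mul_sub_sub_of_coprime {a b : ℕ} (hab : Nat.Coprime a b) (ha : 1 < a)
    (hb : 1 < b) : Odd (a * b - a - b) := by
  have hnot : ¬ (Even a ∧ Even b) := fun ⟨ha2, hb2⟩ => by
    simpa [hab] using Nat.dvd_gcd ha2.two_dvd hb2.two_dvd
  obtain ⟨a, rfl⟩ : ∃ k, a = k + 2 := ⟨a - 2, by omega⟩
  obtain ⟨b, rfl⟩ : ∃ k, b = k + 2 := ⟨b - 2, by omega⟩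
  rw [show (a + 2) * (b + 2) - (a + 2) - (b + 2) = a * b + a + b by ring_nf; omega,
    ← Nat.not_even_iff_odd]
  simp only [Nat.even_add, Nat.even_mul] at hnot ⊢
  tauto

section

variable {S : Set ℕ}

theorem mult_le_of_mem {s : ℕ} (hs : s ∈ S) (hs0 : s ≠ 0) : mult S ≤ s :=
  Nat.sInf_le ⟨hs, hs0⟩

theorem isMinGen_of_lt_two_mul_mult {x : ℕ} (hx : x ∈ S) (hx0 : x ≠ 0)
    (hlt : x < 2 * mult S) : IsMinGen S x := by
  refine ⟨hx, hx0, ?_⟩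
  rintro ⟨u, hu, v, hv, hu0, hv0, rfl⟩
  have := mult_le_of_mem hu hu0
  have := mult_le_of_mem hv hv0
  omega

namespace IsNumSgp

theorem le_frob (hS : IsNumSgp S) {x : ℕ} (hx : x ∉ S) : x ≤ frob S :=
  le_csSup hS.2.2.bddAbove hx

theorem mem_of_frob_lt (hS : IsNumSgp S) {x : ℕ} (hx : frob S < x) : x ∈ S :=
  by_contra fun h => (hS.le_frob h).not_gt hx

theorem frob_notMem (hS : IsNumSgp S) (hne : S ≠ univ) : frob S ∉ S :=
  Nat.sSup_mem (nonempty_compl.mpr hne) hS.2.2.bddAbove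

theorem one_notMem (hS : IsNumSgp S) (hne : S ≠ univ) : 1 ∉ S := by
  refine fun h1 => hne (eq_univ_of_forall fun n => ?_)
  induction n with
  | zero => exact hS.1
  | succ k ih => exact hS.2.1 k ih 1 h1

theorem one_le_frob (hS : IsNumSgp S) (hne : S ≠ univ) : 1 ≤ frob S :=
  hS.le_frob (hS.one_notMem hne)

theorem mult_mem_diff (hS : IsNumSgp S) : mult S ∈ S \ {0} :=
  Nat.sInf_mem ⟨frob S + 1, hS.mem_of_frob_lt (by omega), by simp⟩

theorem mult_mem (hS : IsNumSgp S) : mult S ∈ S := hS.mult_mem_diff.1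

theorem mult_ne_zero (hS : IsNumSgp S) : mult S ≠ 0 := hS.mult_mem_diff.2

theorem two_le_mult (hS : IsNumSgp S) (hne : S ≠ univ) : 2 ≤ mult S := by
  have h1 : mult S ≠ 1 := fun h => hS.one_notMem hne (h ▸ hS.mult_mem)
  have := hS.mult_ne_zero
  omega

theorem frob_mem_SG (hS : IsNumSgp S) (hne : S ≠ univ) : frob S ∈ SG S :=
  ⟨hS.frob_notMem hne, hS.mem_of_frob_lt (by have := hS.one_le_frob hne; omega),
    fun _ _ hs0 => hS.mem_of_frob_lt (by omega)⟩

theorem frob_add_one_eq (hS : IsNumSgp S) (hne : S ≠ univ) :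
    frob S + 1 = leftEls S + genus S := by
  have hsplit : Iic (frob S) = {s ∈ S | s < frob S} ∪ Sᶜ := by
    ext x
    by_cases hx : x ∈ S
    · have : x ≠ frob S := fun h => hS.frob_notMem hne (h ▸ hx)
      simp only [mem_Iic, mem_union, mem_ofPred_eq, mem_compl_iff, hx, true_and,
        not_true_eq_false, or_false]
      omega
    · simp [hx, hS.le_frob hx]
  have hdisj : Disjoint {s ∈ S | s < frob S} Sᶜ :=
    disjoint_left.mpr fun _ hx hxc => hxc hx.1
  rw [← ncard_Iic_nat, hsplit,
    ncard_union_eq hdisj ((finite_Iio _).subset fun _ hx => hx.2) hS.2.2, leftEls, genus]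

theorem one_le_leftEls (hS : IsNumSgp S) (hne : S ≠ univ) : 1 ≤ leftEls S := by
  have h0 : 0 ∈ {s ∈ S | s < frob S} := ⟨hS.1, hS.one_le_frob hne⟩
  exact (ncard_pos ((finite_Iio _).subset fun _ hx => hx.2)).mpr ⟨0, h0⟩

theorem finite_setOf_isMinGen (hS : IsNumSgp S) : {x | IsMinGen S x}.Finite := by
  refine (finite_Iic (2 * frob S + 2)).subset fun x ⟨_, _, hx⟩ => ?_
  by_contra hbig
  simp only [mem_Iic, not_le] at hbig
  exact hx ⟨frob S + 1, hS.mem_of_frob_lt (by omega), x - (frob S + 1),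
    hS.mem_of_frob_lt (by omega), by omega, by omega, by omega⟩

theorem ncard_le_edim (hS : IsNumSgp S) {A : Set ℕ} (hA : A ⊆ {x | IsMinGen S x}) :
    A.ncard ≤ edim S :=
  ncard_le_ncard hA hS.finite_setOf_isMinGen

theorem coe_closure_setOf_isMinGen (hS : IsNumSgp S) :
    (AddSubmonoid.closure {x | IsMinGen S x} : Set ℕ) = S := by
  refine Subset.antisymm (fun x hx => ?_) fun x hx => ?_
  · induction hx using AddSubmonoid.closure_induction with
    | mem x hx => exact hx.1
    | zero => exact hS.1
    | add x y _ _ hx hy => exact hS.2.1 x hx y hy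
  · induction x using Nat.strong_induction_on with
    | _ x ih =>
      by_cases hx0 : x = 0
      · exact hx0 ▸ zero_mem _
      by_cases hmg : IsMinGen S x
      · exact AddSubmonoid.subset_closure hmg
      obtain ⟨u, hu, v, hv, hu0, hv0, rfl⟩ : ∃ u ∈ S, ∃ v ∈ S, u ≠ 0 ∧ v ≠ 0 ∧ x = u + v :=
        not_not.mp fun h => hmg ⟨hx, hx0, h⟩
      exact add_mem (ih u (by omega) hu) (ih v (by omega) hv)

theorem eq_one_of_forall_isMinGen_dvd (hS : IsNumSgp S) {d : ℕ}
    (hd : ∀ x, IsMinGen S x → d ∣ x) : d = 1 := by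
  have hdS : ∀ x ∈ S, d ∣ x := by
    intro x hx
    rw [← hS.coe_closure_setOf_isMinGen] at hx
    induction hx using AddSubmonoid.closure_induction with
    | mem x hx => exact hd x hx
    | zero => exact dvd_zero d
    | add x y _ _ hx hy => exact dvd_add hx hy
  have h1 := hdS (frob S + 1) (hS.mem_of_frob_lt (by omega))
  have h2 := hdS (frob S + 1 + 1) (hS.mem_of_frob_lt (by omega))
  exact Nat.dvd_one.mp ((Nat.dvd_add_right h1).mp h2)

theorem two_le_edim (hS : IsNumSgp S) (hne : S ≠ univ) : 2 ≤ edim S := by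
  by_contra! he
  have hm : IsMinGen S (mult S) :=
    isMinGen_of_lt_two_mul_mult hS.mult_mem hS.mult_ne_zero (by have := hS.mult_ne_zero; omega)
  have hsub := (ncard_le_one hS.finite_setOf_isMinGen).mp (by rw [← edim]; omega)
  have := hS.eq_one_of_forall_isMinGen_dvd fun x hx => by rw [hsub x hx _ hm]
  exact hS.one_notMem hne (this ▸ hS.mult_mem)

theorem odd_frob_of_edim_eq_two (hS : IsNumSgp S) (hne : S ≠ univ) (he : edim S = 2) :
    Odd (frob S) := by
  obtain ⟨a, b, -, hab⟩ := ncard_eq_two.mp he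
  have ha : IsMinGen S a := by rw [← mem_ofPred_eq (p := IsMinGen S), hab]; simp
  have hb : IsMinGen S b := by rw [← mem_ofPred_eq (p := IsMinGen S), hab]; simp
  have hgt : ∀ x, IsMinGen S x → 1 < x := fun x hx => by
    have : x ≠ 1 := fun h => hS.one_notMem hne (h ▸ hx.1)
    have := hx.2.1
    omega
  have hcop : Nat.Coprime a b := hS.eq_one_of_forall_isMinGen_dvd fun x hx => by
    rcases (show x ∈ ({a, b} : Set ℕ) from hab ▸ hx) with rfl | rfl
    exacts [Nat.gcd_dvd_left _ _, Nat.gcd_dvd_right _ _]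
  have hF := frobeniusNumber_pair hcop (hgt a ha) (hgt b hb)
  rw [FrobeniusNumber, ← hab] at hF
  simp only [← SetLike.mem_coe, hS.coe_closure_setOf_isMinGen] at hF
  rw [show frob S = a * b - a - b from hF.csSup_eq]
  exact Nat.odd_mul_sub_sub_of_coprime hcop (hgt a ha) (hgt b hb)

theorem sub_mem_of_isIrred (hS : IsNumSgp S) (hirr : IsIrred S) {x : ℕ} (hx : x ∉ S)
    (h2x : 2 * x ≠ frob S) : frob S - x ∈ S := by
  by_contra hFx
  set D := {z | z ∉ S ∧ frob S - z ∉ S ∧ 2 * z ≠ frob S}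
  have hDbdd : BddAbove D := (hS.2.2.subset fun _ hz => hz.1).bddAbove
  set h := sSup D
  have hD : h ∈ D := Nat.sSup_mem ⟨x, hx, hFx, h2x⟩ hDbdd
  have hmax : ∀ z ∈ D, z ≤ h := fun _ hz => le_csSup hDbdd hz
  have hhF := hS.le_frob hD.1
  have hFh : frob S - h ≤ h := hmax _
    ⟨hD.2.1, by rw [Nat.sub_sub_self hhF]; exact hD.1, by have := hD.2.2; omega⟩
  -- The largest counterexample `h` is a special gap, hence `h = F`; but `F - F = 0 ∈ S`.
  have hSG : h ∈ SG S := by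
    refine ⟨hD.1, hS.mem_of_frob_lt (by have := hD.2.2; omega), fun s hs hs0 => ?_⟩
    by_contra hhs
    have hsh : frob S - (h + s) ∉ S := fun hw => hD.2.1 (by
      simpa [show frob S - (h + s) + s = frob S - h by have := hS.le_frob hhs; omega]
        using hS.2.1 _ hw s hs)
    have := hmax (h + s) ⟨hhs, hsh, by have := hD.2.2; omega⟩
    omega
  have hhF' : h = frob S := mem_singleton_iff.mp (hirr ▸ hSG)
  exact hD.2.1 (by simpa [hhF'] using hS.1)

theorem ncard_le_leftEls_of_isIrred (hS : IsNumSgp S) (hirr : IsIrred S) :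
    {x | x ∉ S ∧ 2 * x ≠ frob S}.ncard ≤ leftEls S := by
  refine ncard_le_ncard_of_injOn (frob S - ·) (fun x ⟨hx, h2x⟩ => ?_) (fun x hx y hy hxy => ?_)
    ((finite_Iio _).subset fun _ hs => hs.2)
  · have hx0 : x ≠ 0 := fun h => hx (h ▸ hS.1)
    exact ⟨hS.sub_mem_of_isIrred hirr hx h2x, by have := hS.le_frob hx; omega⟩
  · have := hS.le_frob hx.1
    have := hS.le_frob hy.1
    simp only at hxy
    omega

theorem genus_le_leftEls_add_one (hS : IsNumSgp S) (hirr : IsIrred S) :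
    genus S ≤ leftEls S + 1 := by
  have hsub : Sᶜ ⊆ insert (frob S / 2) {x | x ∉ S ∧ 2 * x ≠ frob S} := fun x hx => by
    by_cases h2x : 2 * x = frob S
    · exact Or.inl (by omega)
    · exact Or.inr ⟨hx, h2x⟩
  calc genus S ≤ (insert (frob S / 2) {x | x ∉ S ∧ 2 * x ≠ frob S}).ncard :=
        ncard_le_ncard hsub ((hS.2.2.subset fun _ hx => hx.1).insert _)
    _ ≤ {x | x ∉ S ∧ 2 * x ≠ frob S}.ncard + 1 := ncard_insert_le _ _
    _ ≤ leftEls S + 1 := by grw [hS.ncard_le_leftEls_of_isIrred hirr]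

theorem genus_le_leftEls_of_odd (hS : IsNumSgp S) (hirr : IsIrred S) (hodd : Odd (frob S)) :
    genus S ≤ leftEls S := by
  have hgaps : Sᶜ = {x | x ∉ S ∧ 2 * x ≠ frob S} := by
    ext x
    have : 2 * x ≠ frob S := fun h => (Nat.not_even_iff_odd.mpr hodd) ⟨x, by omega⟩
    simp [this]
  rw [genus, hgaps]
  exact hS.ncard_le_leftEls_of_isIrred hirr

theorem wilf_of_isIrred (hS : IsNumSgp S) (hne : S ≠ univ) (hirr : IsIrred S) :
    frob S + 1 ≤ edim S * leftEls S := by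
  have hcount := hS.frob_add_one_eq hne
  have hn := hS.one_le_leftEls hne
  rcases (hS.two_le_edim hne).eq_or_lt with he | he
  · have := hS.genus_le_leftEls_of_odd hirr (hS.odd_frob_of_edim_eq_two hne he.symm)
    rw [← he]
    omega
  · have := hS.genus_le_leftEls_add_one hirr
    calc frob S + 1 ≤ 3 * leftEls S := by omega
      _ ≤ edim S * leftEls S := Nat.mul_le_mul_right _ he

theorem le_subFrob (hS : IsNumSgp S) {x : ℕ} (hx : x ∉ S) (hxF : x ≠ frob S) :
    x ≤ subFrob S :=
  le_csSup hS.2.2.sdiff.bddAbove ⟨hx, hxF⟩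

theorem subFrob_mem (hS : IsNumSgp S) {x : ℕ} (hx : x ∉ S) (hxF : x ≠ frob S) :
    subFrob S ∈ Sᶜ \ {frob S} :=
  Nat.sSup_mem ⟨x, hx, hxF⟩ hS.2.2.sdiff.bddAbove

theorem eq_frob_or_lt_mult_of_isSpecial (hS : IsNumSgp S) (hne : S ≠ univ) (hsp : IsSpecial S)
    (hirr : ¬ IsIrred S) {x : ℕ} (hx : x ∉ S) : x = frob S ∨ x < mult S := by
  obtain ⟨h, hSG, hhF⟩ : ∃ h ∈ SG S, h ≠ frob S := by
    by_contra! hno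
    exact hirr (eq_singleton_iff_unique_mem.mpr ⟨hS.frob_mem_SG hne, hno⟩)
  have hhm := hsp h hSG hhF
  have hh0 : h ≠ 0 := fun h0 => hSG.1 (h0 ▸ hS.1)
  by_contra! ⟨hxF, hxm⟩
  set f := subFrob S
  obtain ⟨hf, hfF⟩ := hS.subFrob_mem hx hxF
  have hfF : f ≠ frob S := hfF
  have hfle := hS.le_frob hf
  have hxf := hS.le_subFrob hx hxF
  have hFh : frob S - h ≤ f := by
    refine hS.le_subFrob (fun hmem => hS.frob_notMem hne ?_) (by omega)
    simpa [Nat.add_sub_cancel' (hS.le_frob hSG.1)] using hSG.2.2 _ hmem (by omega)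
  have hFf : frob S - f ∉ S := fun hmem =>
    (mult_le_of_mem hmem (by omega)).not_gt (by omega)
  have hfSG : f ∈ SG S := by
    refine ⟨hf, hS.mem_of_frob_lt (by omega), fun s hs hs0 => by_contra fun hfs => ?_⟩
    have : f + s = frob S := by_contra fun hne' => (hS.le_subFrob hfs hne').not_gt (by omega)
    exact hFf (by rwa [show frob S - f = s by omega])
  exact (hsp f hfSG hfF).not_ge (by omega)

theorem mem_iff_of_gaps (hS : IsNumSgp S) (hne : S ≠ univ)
    (hgaps : ∀ x ∉ S, x = frob S ∨ x < mult S) {x : ℕ} :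
    x ∈ S ↔ x = 0 ∨ (mult S ≤ x ∧ x ≠ frob S) := by
  constructor
  · intro hx
    by_cases hx0 : x = 0
    · exact Or.inl hx0
    · exact Or.inr ⟨mult_le_of_mem hx hx0, fun h => hS.frob_notMem hne (h ▸ hx)⟩
  · rintro (rfl | ⟨hmx, hxF⟩)
    · exact hS.1
    · by_contra hx
      rcases hgaps x hx with h | h <;> omega

theorem leftEls_eq_of_gaps (hS : IsNumSgp S) (hne : S ≠ univ)
    (hgaps : ∀ x ∉ S, x = frob S ∨ x < mult S) : leftEls S = frob S - mult S + 1 := by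
  have hm := hS.mult_ne_zero
  have hF := hS.one_le_frob hne
  have hleft : {s ∈ S | s < frob S} = insert 0 (Ico (mult S) (frob S)) := by
    ext x
    simp only [mem_ofPred_eq, mem_insert_iff, mem_Ico, hS.mem_iff_of_gaps hne hgaps]
    omega
  rw [leftEls, hleft, ncard_insert_of_notMem (by simp; omega) (finite_Ico _ _), ncard_Ico_nat]

theorem mult_le_edim_or_of_gaps (hS : IsNumSgp S) (hne : S ≠ univ)
    (hgaps : ∀ x ∉ S, x = frob S ∨ x < mult S) :
    mult S ≤ edim S ∨
      (mult S + 2 ≤ frob S ∧ frob S < 2 * mult S ∧ mult S - 1 ≤ edim S) := by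
  set m := mult S
  have hm := hS.two_le_mult hne
  have hmem : ∀ {x}, x ∈ S ↔ x = 0 ∨ (m ≤ x ∧ x ≠ frob S) := hS.mem_iff_of_gaps hne hgaps
  have hsub : Ico m (2 * m) \ {frob S} ⊆ {x | IsMinGen S x} := fun x ⟨hx, hxF⟩ =>
    isMinGen_of_lt_two_mul_mult (hmem.mpr (Or.inr ⟨hx.1, hxF⟩)) (by have := hx.1; omega) hx.2
  by_cases hF : frob S ∈ Ico m (2 * m)
  · have hcard : (Ico m (2 * m) \ {frob S}).ncard = m - 1 := by
      rw [ncard_sdiff_singleton_of_mem hF, ncard_Ico_nat]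
      omega
    by_cases hFm : frob S = m + 1
    · left
      -- the only way to write `2m + 1` as a sum of elements `≥ m` is `m + (m + 1)`, and `m + 1 = F`
      have h2m : IsMinGen S (2 * m + 1) := by
        refine ⟨hmem.mpr (Or.inr ⟨by omega, by omega⟩), by omega, ?_⟩
        rintro ⟨u, hu, v, hv, hu0, hv0, huv⟩
        have := hmem.mp hu
        have := hmem.mp hv
        omega
      have := hS.ncard_le_edim (insert_subset h2m hsub)
      rw [ncard_insert_of_notMem (by simp) (finite_Ico _ _).sdiff, hcard] at this
      omega
    · right
      have hFm' : frob S ≠ m := fun h => hS.frob_notMem hne (h ▸ hS.mult_mem)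
      rw [mem_Ico] at hF
      exact ⟨by omega, hF.2, hcard ▸ hS.ncard_le_edim hsub⟩
  · left
    have := hS.ncard_le_edim hsub
    rwa [sdiff_singleton_eq_self hF, ncard_Ico_nat, show 2 * m - m = m by omega] at this

theorem wilf_of_gaps (hS : IsNumSgp S) (hne : S ≠ univ)
    (hgaps : ∀ x ∉ S, x = frob S ∨ x < mult S) : frob S + 1 ≤ edim S * leftEls S := by
  rw [hS.leftEls_eq_of_gaps hne hgaps]
  have hm := hS.two_le_mult hne
  have hFm : frob S ≠ mult S := fun h => hS.frob_notMem hne (h ▸ hS.mult_mem)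
  rcases hS.mult_le_edim_or_of_gaps hne hgaps with he | ⟨hF2, hF2m, he⟩
  · refine le_trans ?_ (Nat.mul_le_mul_right _ he)
    rcases hFm.lt_or_gt with hlt | hgt
    · rw [Nat.sub_eq_zero_of_le hlt.le]
      omega
    · obtain ⟨k, hk⟩ : ∃ k, frob S = mult S + k + 1 := ⟨frob S - mult S - 1, by omega⟩
      rw [hk, show mult S + k + 1 - mult S + 1 = k + 2 by omega]
      nlinarith
  · refine le_trans ?_ (Nat.mul_le_mul_right _ he)
    obtain ⟨k, hk⟩ : ∃ k, frob S = mult S + k + 2 := ⟨frob S - mult S - 2, by omega⟩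
    obtain ⟨p, hp⟩ : ∃ p, mult S = p + 3 := ⟨mult S - 3, by omega⟩
    rw [hk, show mult S + k + 2 - mult S + 1 = k + 3 by omega, hp,
      show p + 3 - 1 = p + 2 by omega]
    nlinarith

end IsNumSgp

end

theorem special_satisfies_wilf (S : Set ℕ) (hS : IsNumSgp S) (hne : S ≠ Set.univ)
    (hsp : IsSpecial S) :
    edim S * leftEls S ≥ frob S + 1 := by
  by_cases hirr : IsIrred S
  · exact hS.wilf_of_isIrred hne hirr
  · exact hS.wilf_of_gaps hne fun _ hx => hS.eq_frob_or_lt_mult_of_isSpecial hne hsp hirr hx
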